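/- Let (Ω, P) be a probability space, H a separable Hilbert space, and X_1, ..., X_n i.i.d. H-valued random variables with ||X_j|| ≤ K almost surely. Then for every ε > 0, the probability that ||(1/n) Σ_{j=1}^n X_j - E[X_1]|| > ε is at most 2 * exp(-n ε^2 / (2 K^2)). -/

import Mathlib

/-!
Pinelis' argument, with `cosh (λ ‖·‖)` as Lyapunov function. Fix `x` and a variable `V` with
`‖V‖ ≤ K`, and put `y = x - E V`. Then `‖y + V‖² ≤ ‖y‖² + K² + 2 ‖y‖ s` with
`s = ⟪y, V⟫ / ‖y‖ ∈ [-K, K]`, so convexity of `u ↦ cosh √u` bounds `cosh (λ ‖y + V‖)` by the chord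
of `s ↦ cosh (λ (‖y‖ + s))` over `[-K, K]`. The chord is affine, so its mean is its value at
`E s`, and Hoeffding's lemma for a two-point law bounds that by `cosh (λ ‖x‖) exp (λ² K² / 2)`.
Taking `x = S_k` and `V = X_k`, independence and Fubini give
`E cosh (λ ‖S_n‖) ≤ exp (n λ² K² / 2)` for the centred partial sums `S_n`, and Markov's inequality
with `λ = ε / K²` gives the tail bound.
-/

open Real MeasureTheory ProbabilityTheory Finset
open scoped ENNReal InnerProductSpace Nat

namespace Real

lemma cosh_sqrt_sq (x : ℝ) : cosh √(x ^ 2) = cosh x := by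
  rw [sqrt_sq_eq_abs, cosh_abs]

lemma convexOn_cosh_sqrt : ConvexOn ℝ (Set.Ici 0) fun u ↦ cosh √u := by
  have hasSum {u : ℝ} (hu : 0 ≤ u) : HasSum (fun n ↦ u ^ n / (2 * n)!) (cosh √u) := by
    simpa only [pow_mul, sq_sqrt hu] using hasSum_cosh √u
  refine ⟨convex_Ici 0, fun x (hx : 0 ≤ x) y (hy : 0 ≤ y) a b ha hb hab ↦ ?_⟩
  refine hasSum_le (fun n ↦ ?_) (hasSum (by positivity))
    (((hasSum hx).mul_left a).add ((hasSum hy).mul_left b))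
  rw [mul_div_assoc', mul_div_assoc', ← add_div]
  gcongr
  exact (convexOn_pow n).2 hx hy ha hb hab

lemma monotoneOn_cosh_sqrt : MonotoneOn (fun u ↦ cosh √u) (Set.Ici 0) := fun x _ y _ hxy ↦ by
  rw [cosh_le_cosh, abs_of_nonneg (sqrt_nonneg x), abs_of_nonneg (sqrt_nonneg y)]
  exact sqrt_le_sqrt hxy

lemma cosh_le_of_sq_le {w₁ w₂ r A B : ℝ} (hw₁ : 0 ≤ w₁) (hw₂ : 0 ≤ w₂) (hw : w₁ + w₂ = 1)
    (hr : r ^ 2 ≤ w₁ * A ^ 2 + w₂ * B ^ 2) : cosh r ≤ w₁ * cosh A + w₂ * cosh B := by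
  rw [← cosh_sqrt_sq r, ← cosh_sqrt_sq A, ← cosh_sqrt_sq B]
  calc cosh √(r ^ 2) ≤ cosh √(w₁ * A ^ 2 + w₂ * B ^ 2) :=
        monotoneOn_cosh_sqrt (sq_nonneg r) (by positivity : (0 : ℝ) ≤ _) hr
    _ ≤ _ := convexOn_cosh_sqrt.2 (sq_nonneg A) (sq_nonneg B) hw₁ hw₂ hw

lemma mul_exp_add_mul_exp_neg_le {p : ℝ} (hp₀ : 0 ≤ p) (hp₁ : p ≤ 1) (l : ℝ) :
    p * exp l + (1 - p) * exp (-l) ≤ exp ((2 * p - 1) * l + l ^ 2 / 2) := by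
  let μ : Measure ℝ :=
    ENNReal.ofReal p • Measure.dirac 1 + ENNReal.ofReal (1 - p) • Measure.dirac (-1)
  have : IsProbabilityMeasure μ :=
    ⟨by simp [μ, ← ENNReal.ofReal_add hp₀ (sub_nonneg.2 hp₁)]⟩
  have integral_two_point (f : ℝ → ℝ) : ∫ x, f x ∂μ = p * f 1 + (1 - p) * f (-1) := by
    rw [integral_add_measure, integral_smul_measure, integral_smul_measure, integral_dirac,
      integral_dirac, ENNReal.toReal_ofReal hp₀, ENNReal.toReal_ofReal (sub_nonneg.2 hp₁),
      smul_eq_mul, smul_eq_mul]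
    · exact (integrable_dirac enorm_lt_top).smul_measure ENNReal.ofReal_ne_top
    · exact (integrable_dirac enorm_lt_top).smul_measure ENNReal.ofReal_ne_top
  have hsupp : ∀ᵐ x ∂μ, x ∈ Set.Icc (-1 : ℝ) 1 := by
    refine ae_add_measure_iff.2 ⟨Measure.ae_smul_measure ?_ _, Measure.ae_smul_measure ?_ _⟩ <;>
      simp [ae_dirac_eq]
  have hoeffding := (hasSubgaussianMGF_of_mem_Icc aemeasurable_id hsupp).mgf_le l
  have hconst : ((‖(1 : ℝ) - -1‖₊ / 2) ^ 2 : NNReal) = 1 := by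
    ext; norm_num
  have hmean : μ[id] = 2 * p - 1 := by rw [integral_two_point, id, id]; ring
  rw [mgf, integral_two_point, hconst, hmean, NNReal.coe_one, id, id] at hoeffding
  have shift (x : ℝ) : exp (x * l) = exp ((2 * p - 1) * l) * exp (l * (x - (2 * p - 1))) := by
    rw [← exp_add]; ring_nf
  calc p * exp l + (1 - p) * exp (-l) = p * exp (1 * l) + (1 - p) * exp (-1 * l) := by
        rw [one_mul, neg_one_mul]
    _ = exp ((2 * p - 1) * l) * (p * exp (l * (1 - (2 * p - 1)))
          + (1 - p) * exp (l * (-1 - (2 * p - 1)))) := by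
        rw [shift 1, shift (-1)]; ring
    _ ≤ exp ((2 * p - 1) * l) * exp (1 * l ^ 2 / 2) := by gcongr
    _ = exp ((2 * p - 1) * l + l ^ 2 / 2) := by rw [← exp_add, one_mul]

lemma mul_cosh_add_add_mul_cosh_sub_le {p : ℝ} (hp₀ : 0 ≤ p) (hp₁ : p ≤ 1) (c l : ℝ) :
    p * cosh (c + l) + (1 - p) * cosh (c - l) ≤ cosh (c + (2 * p - 1) * l) * exp (l ^ 2 / 2) := by
  have h₁ := mul_exp_add_mul_exp_neg_le hp₀ hp₁ l
  have h₂ := mul_exp_add_mul_exp_neg_le (sub_nonneg.2 hp₁) (sub_le_self 1 hp₀) l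
  rw [sub_sub_cancel] at h₂
  calc p * cosh (c + l) + (1 - p) * cosh (c - l)
      = (exp c * (p * exp l + (1 - p) * exp (-l))
          + exp (-c) * ((1 - p) * exp l + p * exp (-l))) / 2 := by
        simp only [cosh_eq, neg_add, neg_neg, sub_eq_add_neg, exp_add]; ring
    _ ≤ (exp c * exp ((2 * p - 1) * l + l ^ 2 / 2)
          + exp (-c) * exp ((2 * (1 - p) - 1) * l + l ^ 2 / 2)) / 2 := by gcongr
    _ = cosh (c + (2 * p - 1) * l) * exp (l ^ 2 / 2) := by
        rw [cosh_eq, ← exp_add, ← exp_add, div_mul_eq_mul_div, add_mul, ← exp_add, ← exp_add]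
        ring_nf

lemma cosh_mul_le_chord {K a s r : ℝ} (l : ℝ) (hK : 0 < K) (hs : |s| ≤ K)
    (hr : r ^ 2 ≤ a ^ 2 + K ^ 2 + 2 * a * s) :
    cosh (l * r) ≤ ((K + s) * cosh (l * (a + K)) + (K - s) * cosh (l * (a - K))) / (2 * K) := by
  obtain ⟨hs₁, hs₂⟩ := abs_le.1 hs
  have key := cosh_le_of_sq_le (r := l * r) (A := l * (a + K)) (B := l * (a - K))
    (w₁ := (K + s) / (2 * K)) (w₂ := (K - s) / (2 * K)) (div_nonneg (by linarith) (by positivity))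
    (div_nonneg (by linarith) (by positivity))
    (by field_simp; ring) ?_
  · convert key using 1; field_simp
  · calc (l * r) ^ 2 = l ^ 2 * r ^ 2 := by ring
      _ ≤ l ^ 2 * (a ^ 2 + K ^ 2 + 2 * a * s) := by gcongr
      _ = _ := by field_simp; ring

lemma chord_le_cosh_mul_exp {K a s : ℝ} (l : ℝ) (hK : 0 < K) (hs : |s| ≤ K) :
    ((K + s) * cosh (l * (a + K)) + (K - s) * cosh (l * (a - K))) / (2 * K)
      ≤ cosh (l * (a + s)) * exp (l ^ 2 * K ^ 2 / 2) := by
  obtain ⟨hs₁, hs₂⟩ := abs_le.1 hs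
  have key := mul_cosh_add_add_mul_cosh_sub_le (p := (K + s) / (2 * K))
    (div_nonneg (by linarith) (by positivity))
    (by rw [div_le_one (by positivity)]; linarith) (l * a) (l * K)
  convert key using 2
  · field_simp; ring_nf
  · congr 1; field_simp; ring
  · ring_nf

end Real

section InnerProductSpace

variable {H : Type*} [NormedAddCommGroup H] [InnerProductSpace ℝ H]

/- With `0 / 0 = 0` both lemmas also hold for `y = 0`, so `⟪y, v⟫ / ‖y‖` can serve as the
component of `v` along `y` without a case split. -/
lemma norm_mul_inner_div_norm (y v : H) : ‖y‖ * (⟪y, v⟫_ℝ / ‖y‖) = ⟪y, v⟫_ℝ := by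
  rcases eq_or_ne y 0 with rfl | hy
  · simp
  · exact mul_div_cancel₀ _ (norm_ne_zero_iff.2 hy)

lemma abs_inner_div_norm_le (y v : H) : |⟪y, v⟫_ℝ / ‖y‖| ≤ ‖v‖ := by
  rw [abs_div, abs_norm]
  exact div_le_of_le_mul₀ (norm_nonneg y) (norm_nonneg v)
    ((abs_real_inner_le_norm y v).trans_eq (mul_comm _ _))

variable [CompleteSpace H] [MeasurableSpace H] [BorelSpace H] [SecondCountableTopology H]

lemma lintegral_cosh_norm_add_sub_integral_le (ν : Measure H) [IsProbabilityMeasure ν]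
    {K : ℝ} (hK : 0 < K) (hν : ∀ᵐ v ∂ν, ‖v‖ ≤ K) (l : ℝ) (x : H) :
    ∫⁻ v, ENNReal.ofReal (cosh (l * ‖x + (v - ∫ w, w ∂ν)‖)) ∂ν
      ≤ ENNReal.ofReal (cosh (l * ‖x‖) * exp (l ^ 2 * K ^ 2 / 2)) := by
  set m := ∫ w, w ∂ν
  set y := x - m
  set a := ‖y‖
  set chord : ℝ → ℝ := fun s ↦
    ((K + s) * cosh (l * (a + K)) + (K - s) * cosh (l * (a - K))) / (2 * K)
  have hid : Integrable (fun v : H ↦ v) ν :=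
    (integrable_const K).mono' aestronglyMeasurable_id hν
  have hm : ‖m‖ ≤ K := by
    simpa using norm_integral_le_of_norm_le_const hν
  have hle : ∀ᵐ v ∂ν, cosh (l * ‖x + (v - m)‖) ≤ chord (⟪y, v⟫_ℝ / a) := by
    filter_upwards [hν] with v hv
    refine Real.cosh_mul_le_chord l hK ((abs_inner_div_norm_le y v).trans hv) ?_
    rw [show x + (v - m) = y + v by simp only [y]; abel, norm_add_sq_real, mul_assoc,
      norm_mul_inner_div_norm]
    nlinarith [norm_nonneg v]
  have hchord_affine : chord = fun s ↦ (cosh (l * (a + K)) + cosh (l * (a - K))) / 2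
      + s * ((cosh (l * (a + K)) - cosh (l * (a - K))) / (2 * K)) := by
    ext s; simp only [chord]; field_simp; ring
  have hs_int : Integrable (fun v ↦ ⟪y, v⟫_ℝ / a) ν := (hid.const_inner y).div_const a
  have hchord_integrable : Integrable (fun v ↦ chord (⟪y, v⟫_ℝ / a)) ν := by
    rw [hchord_affine]; exact (integrable_const _).add (hs_int.mul_const _)
  have hchord_int : ∫ v, chord (⟪y, v⟫_ℝ / a) ∂ν = chord (⟪y, m⟫_ℝ / a) := by
    rw [hchord_affine, integral_add (integrable_const _) (hs_int.mul_const _), integral_const,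
      integral_mul_const, integral_div, integral_inner hid, probReal_univ, one_smul]
  have hmx : a + ⟪y, m⟫_ℝ / a = ⟪y, x⟫_ℝ / a := by
    rw [show x = y + m by simp only [y]; abel, inner_add_right, add_div,
      real_inner_self_eq_norm_sq, sq, mul_self_div_self]
  calc ∫⁻ v, ENNReal.ofReal (cosh (l * ‖x + (v - m)‖)) ∂ν
      ≤ ∫⁻ v, ENNReal.ofReal (chord (⟪y, v⟫_ℝ / a)) ∂ν :=
        lintegral_mono_ae (hle.mono fun v hv ↦ ENNReal.ofReal_le_ofReal hv)
    _ = ENNReal.ofReal (chord (⟪y, m⟫_ℝ / a)) := by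
        rw [← hchord_int, ofReal_integral_eq_lintegral_ofReal hchord_integrable
          (hle.mono fun v hv ↦ (cosh_pos _).le.trans hv)]
    _ ≤ ENNReal.ofReal (cosh (l * (a + ⟪y, m⟫_ℝ / a)) * exp (l ^ 2 * K ^ 2 / 2)) :=
        ENNReal.ofReal_le_ofReal <|
          Real.chord_le_cosh_mul_exp l hK ((abs_inner_div_norm_le y m).trans hm)
    _ ≤ ENNReal.ofReal (cosh (l * ‖x‖) * exp (l ^ 2 * K ^ 2 / 2)) := by
        gcongr
        rw [cosh_le_cosh, hmx, abs_mul, abs_mul, abs_norm]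
        exact mul_le_mul_of_nonneg_left (abs_inner_div_norm_le y x) (abs_nonneg l)

variable {Ω : Type*} [MeasurableSpace Ω] {P : Measure Ω} [IsProbabilityMeasure P]

lemma lintegral_cosh_norm_add_sub_integral_le_of_indepFun {Y Z : Ω → H} (hY : Measurable Y)
    (hZ : Measurable Z) (hYZ : IndepFun Y Z P) {K : ℝ} (hK : 0 < K)
    (hZK : ∀ᵐ ω ∂P, ‖Z ω‖ ≤ K) (l : ℝ) :
    ∫⁻ ω, ENNReal.ofReal (cosh (l * ‖Y ω + (Z ω - ∫ ω', Z ω' ∂P)‖)) ∂P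
      ≤ ENNReal.ofReal (exp (l ^ 2 * K ^ 2 / 2)) * ∫⁻ ω, ENNReal.ofReal (cosh (l * ‖Y ω‖)) ∂P := by
  set ν := P.map Z
  have : IsProbabilityMeasure ν := Measure.isProbabilityMeasure_map hZ.aemeasurable
  have hν : ∀ᵐ v ∂ν, ‖v‖ ≤ K :=
    (ae_map_iff hZ.aemeasurable (measurableSet_le measurable_norm measurable_const)).2 hZK
  have hmean : ∫ ω, Z ω ∂P = ∫ v, v ∂ν :=
    (integral_map hZ.aemeasurable aestronglyMeasurable_id).symm
  set F : H × H → ℝ≥0∞ := fun z ↦ ENNReal.ofReal (cosh (l * ‖z.1 + (z.2 - ∫ v, v ∂ν)‖))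
  have hF : Measurable F := by fun_prop
  calc ∫⁻ ω, ENNReal.ofReal (cosh (l * ‖Y ω + (Z ω - ∫ ω', Z ω' ∂P)‖)) ∂P
      = ∫⁻ z, F z ∂(P.map Y).prod ν := by
        rw [← hYZ.map_prod_eq_prod_map_map hY.aemeasurable hZ.aemeasurable,
          lintegral_map hF (hY.prodMk hZ), hmean]
    _ = ∫⁻ s, ∫⁻ v, F (s, v) ∂ν ∂(P.map Y) := lintegral_prod F hF.aemeasurable
    _ ≤ ∫⁻ s, ENNReal.ofReal (exp (l ^ 2 * K ^ 2 / 2)) * ENNReal.ofReal (cosh (l * ‖s‖))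
          ∂(P.map Y) := by
        refine lintegral_mono fun s ↦ ?_
        rw [← ENNReal.ofReal_mul (exp_pos _).le, mul_comm]
        exact lintegral_cosh_norm_add_sub_integral_le ν hK hν l s
    _ = ENNReal.ofReal (exp (l ^ 2 * K ^ 2 / 2)) * ∫⁻ ω, ENNReal.ofReal (cosh (l * ‖Y ω‖)) ∂P := by
        rw [lintegral_const_mul _ (by fun_prop), lintegral_map (by fun_prop) hY]

lemma lintegral_cosh_norm_sum_sub_integral_le {X : ℕ → Ω → H} (hmeas : ∀ j, Measurable (X j))
    (hindep : iIndepFun X P) {K : ℝ} (hK : 0 < K) (hbdd : ∀ j, ∀ᵐ ω ∂P, ‖X j ω‖ ≤ K)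
    (l : ℝ) (n : ℕ) :
    ∫⁻ ω, ENNReal.ofReal (cosh (l * ‖∑ j ∈ range n, (X j ω - ∫ ω', X j ω' ∂P)‖)) ∂P
      ≤ ENNReal.ofReal (exp (l ^ 2 * K ^ 2 / 2)) ^ n := by
  induction n with
  | zero => simp
  | succ k ih =>
    set S : Ω → H := fun ω ↦ ∑ j ∈ range k, (X j ω - ∫ ω', X j ω' ∂P)
    have hS : Measurable S := by fun_prop
    have hSX : IndepFun S (X k) P := by
      convert (hindep.indepFun_finsetSum_of_notMem hmeas (notMem_range_self (n := k))).comp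
        (measurable_id.sub_const (∑ j ∈ range k, ∫ ω', X j ω' ∂P)) measurable_id using 1
      · ext ω; simp [S, sum_sub_distrib]
      · rfl
    simp_rw [sum_range_succ]
    calc _ ≤ ENNReal.ofReal (exp (l ^ 2 * K ^ 2 / 2))
            * ∫⁻ ω, ENNReal.ofReal (cosh (l * ‖S ω‖)) ∂P :=
          lintegral_cosh_norm_add_sub_integral_le_of_indepFun hS (hmeas k) hSX hK (hbdd k) l
      _ ≤ ENNReal.ofReal (exp (l ^ 2 * K ^ 2 / 2)) * ENNReal.ofReal (exp (l ^ 2 * K ^ 2 / 2)) ^ k :=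
          by gcongr
      _ = _ := (pow_succ' _ _).symm

lemma measure_le_norm_sum_sub_integral_le {X : ℕ → Ω → H} (hmeas : ∀ j, Measurable (X j))
    (hindep : iIndepFun X P) {K : ℝ} (hK : 0 < K) (hbdd : ∀ j, ∀ᵐ ω ∂P, ‖X j ω‖ ≤ K)
    (n : ℕ) {t : ℝ} (ht : 0 ≤ t) (l : ℝ) :
    P {ω | t ≤ ‖∑ j ∈ range n, (X j ω - ∫ ω', X j ω' ∂P)‖}
      ≤ ENNReal.ofReal (2 * exp (n * (l ^ 2 * K ^ 2 / 2) - l * t)) := by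
  set S : Ω → H := fun ω ↦ ∑ j ∈ range n, (X j ω - ∫ ω', X j ω' ∂P)
  have hS : Measurable S := by fun_prop
  have hsub : {ω | t ≤ ‖S ω‖}
      ⊆ {ω | ENNReal.ofReal (cosh (l * t)) ≤ ENNReal.ofReal (cosh (l * ‖S ω‖))} := by
    refine fun ω (hω : t ≤ ‖S ω‖) ↦ ENNReal.ofReal_le_ofReal (cosh_le_cosh.2 ?_)
    rw [abs_mul, abs_mul, abs_of_nonneg ht, abs_norm]
    exact mul_le_mul_of_nonneg_left hω (abs_nonneg l)
  have hmarkov : ENNReal.ofReal (cosh (l * t)) * P {ω | t ≤ ‖S ω‖}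
      ≤ ENNReal.ofReal (exp (n * (l ^ 2 * K ^ 2 / 2))) := by
    calc _ ≤ ENNReal.ofReal (cosh (l * t))
          * P {ω | ENNReal.ofReal (cosh (l * t)) ≤ ENNReal.ofReal (cosh (l * ‖S ω‖))} := by
          gcongr
      _ ≤ ∫⁻ ω, ENNReal.ofReal (cosh (l * ‖S ω‖)) ∂P :=
          mul_meas_ge_le_lintegral₀ (by fun_prop) _
      _ ≤ ENNReal.ofReal (exp (l ^ 2 * K ^ 2 / 2)) ^ n :=
          lintegral_cosh_norm_sum_sub_integral_le hmeas hindep hK hbdd l n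
      _ = ENNReal.ofReal (exp (n * (l ^ 2 * K ^ 2 / 2))) := by
          rw [← ENNReal.ofReal_pow (exp_pos _).le, ← exp_nat_mul]
  have hcosh : exp (l * t) ≤ 2 * cosh (l * t) := by
    rw [cosh_eq]; linarith [exp_pos (-(l * t))]
  calc P {ω | t ≤ ‖S ω‖}
      ≤ ENNReal.ofReal (exp (n * (l ^ 2 * K ^ 2 / 2))) / ENNReal.ofReal (cosh (l * t)) := by
        rw [ENNReal.le_div_iff_mul_le (by simp [cosh_pos]) (by simp), mul_comm]
        exact hmarkov
    _ = ENNReal.ofReal (exp (n * (l ^ 2 * K ^ 2 / 2)) / cosh (l * t)) :=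
        (ENNReal.ofReal_div_of_pos (cosh_pos _)).symm
    _ ≤ ENNReal.ofReal (2 * exp (n * (l ^ 2 * K ^ 2 / 2) - l * t)) := by
        refine ENNReal.ofReal_le_ofReal ((div_le_iff₀ (cosh_pos _)).2 ?_)
        calc exp (n * (l ^ 2 * K ^ 2 / 2))
            = exp (n * (l ^ 2 * K ^ 2 / 2) - l * t) * exp (l * t) := by
              rw [← exp_add, sub_add_cancel]
          _ ≤ exp (n * (l ^ 2 * K ^ 2 / 2) - l * t) * (2 * cosh (l * t)) := by gcongr
          _ = _ := by ring

end InnerProductSpace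

theorem stmt_12 {Ω H : Type*} [MeasurableSpace Ω]
    [NormedAddCommGroup H] [InnerProductSpace ℝ H] [CompleteSpace H]
    [SecondCountableTopology H] [MeasurableSpace H] [BorelSpace H]
    (P : Measure Ω) [IsProbabilityMeasure P]
    (n : ℕ) (hn : 0 < n) (X : ℕ → Ω → H)
    (hmeas : ∀ j, Measurable (X j))
    (hindep : iIndepFun X P)
    (hident : ∀ j, Measure.map (X j) P = Measure.map (X 0) P)
    (K : ℝ) (hK : 0 < K)
    (hbdd : ∀ j, ∀ᵐ ω ∂P, ‖X j ω‖ ≤ K)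
    (ε : ℝ) (hε : 0 < ε) :
    P {ω | ε < ‖(n : ℝ)⁻¹ • ∑ j ∈ Finset.range n, X j ω - ∫ ω', X 0 ω' ∂P‖} ≤
      ENNReal.ofReal (2 * Real.exp (-(n : ℝ) * ε ^ 2 / (2 * K ^ 2))) := by
  have hmean (j : ℕ) : ∫ ω, X j ω ∂P = ∫ ω, X 0 ω ∂P :=
    IdentDistrib.integral_eq ⟨(hmeas j).aemeasurable, (hmeas 0).aemeasurable, hident j⟩
  have hn' : (0 : ℝ) < n := Nat.cast_pos.2 hn
  have hcentre (ω : Ω) : (n : ℝ)⁻¹ • ∑ j ∈ range n, X j ω - ∫ ω', X 0 ω' ∂P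
      = (n : ℝ)⁻¹ • ∑ j ∈ range n, (X j ω - ∫ ω', X j ω' ∂P) := by
    simp [sum_sub_distrib, hmean, smul_sub, ← Nat.cast_smul_eq_nsmul ℝ, smul_smul, hn'.ne']
  calc P {ω | ε < ‖(n : ℝ)⁻¹ • ∑ j ∈ range n, X j ω - ∫ ω', X 0 ω' ∂P‖}
      ≤ P {ω | n * ε ≤ ‖∑ j ∈ range n, (X j ω - ∫ ω', X j ω' ∂P)‖} := by
        refine measure_mono fun ω (hω : ε < _) ↦ ?_
        rw [hcentre, norm_smul, norm_inv, Real.norm_natCast, inv_mul_eq_div,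
          lt_div_iff₀' hn'] at hω
        exact hω.le
    _ ≤ ENNReal.ofReal (2 * exp (n * ((ε / K ^ 2) ^ 2 * K ^ 2 / 2) - ε / K ^ 2 * (n * ε))) :=
        measure_le_norm_sum_sub_integral_le hmeas hindep hK hbdd n (by positivity) _
    _ = ENNReal.ofReal (2 * exp (-n * ε ^ 2 / (2 * K ^ 2))) := by
        congr 3; field_simp; ring
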